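/- arXiv:1810.11111 — 2 statements merged into one kernel-verified Lean document; each statement's English description precedes it below -/
import Mathlib

section
/- The number of degrees of freedom of the sparse grid space ⊕_{|l|₁ ≤ N} W_{l}^k, where dim W_{l}^k = (k+1)^d ∏_{m=1}^d max(1, 2^{l_m − 1}), satisfies the bound: it is at most C (k+1)^d 2^N N^{d-1} for a constant C depending only on d, i.e. it scales as O((k+1)^d 2^N N^{d-1}). -/
/-!
Each summand is at most `(k+1)^d 2^{|l|₁}`. Grouping the levels by `s = |l|₁`, a level with
`|l|₁ = s` is determined by its first `d-1` entries, so there are at most `(N+1)^{d-1}` of them,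
and the geometric sum `∑_{s ≤ N} 2^s < 2^{N+1}` leaves the bound
`(k+1)^d (N+1)^{d-1} 2^{N+1}`, where `N + 1 ≤ 2N` once `N ≥ 1`.
-/

open Finset

def sparseLevels (d N : ℕ) : Finset (Fin d → ℕ) :=
  (Fintype.piFinset fun _ : Fin d => range (N + 1)).filter fun l => ∑ m, l m ≤ N

lemma max_one_two_pow_sub_one_le (a : ℕ) : max 1 (2 ^ (a - 1)) ≤ 2 ^ a :=
  max_le Nat.one_le_two_pow (Nat.pow_le_pow_right two_pos (Nat.sub_le a 1))

lemma prod_max_one_two_pow_sub_one_le {ι : Type*} (s : Finset ι) (l : ι → ℕ) :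
    ∏ m ∈ s, max 1 (2 ^ (l m - 1)) ≤ 2 ^ ∑ m ∈ s, l m := by
  rw [← prod_pow_eq_pow_sum]
  exact prod_le_prod' fun m _ => max_one_two_pow_sub_one_le (l m)

lemma card_filter_sparseLevels_sum_eq_le (d N s : ℕ) :
    #{l ∈ sparseLevels d N | ∑ m, l m = s} ≤ (N + 1) ^ (d - 1) := by
  cases d with
  | zero => exact (card_le_univ _).trans (by simp)
  | succ n =>
    calc #{l ∈ sparseLevels (n + 1) N | ∑ m, l m = s}
        ≤ #(Fintype.piFinset fun _ : Fin n => range (N + 1)) := by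
          refine card_le_card_of_injOn Fin.init (fun l hl => ?_) fun l hl l' hl' h => ?_
          · have hl := Fintype.mem_piFinset.1 (mem_filter.1 (mem_filter.1 hl).1).1
            exact Fintype.mem_piFinset.2 fun i => hl _
          · rw [mem_coe, mem_filter] at hl hl'
            have hlast : l (Fin.last n) = l' (Fin.last n) := by
              have := hl.2.trans hl'.2.symm
              rw [Fin.sum_univ_castSucc, Fin.sum_univ_castSucc] at this
              have hinit : ∑ i : Fin n, l i.castSucc = ∑ i : Fin n, l' i.castSucc :=
                sum_congr rfl fun i _ => congrFun h i
              omega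
            rw [← Fin.snoc_init_self l, ← Fin.snoc_init_self l', h, hlast]
      _ = (N + 1) ^ (n + 1 - 1) := by simp

lemma sum_sparseLevels_two_pow_le (d N : ℕ) :
    ∑ l ∈ sparseLevels d N, 2 ^ ∑ m, l m ≤ (N + 1) ^ (d - 1) * 2 ^ (N + 1) := by
  rw [← sum_fiberwise_of_maps_to (s := sparseLevels d N) (g := fun l => ∑ m, l m)
    (t := range (N + 1)) fun l hl => mem_range_succ_iff.2 (mem_filter.1 hl).2]
  calc ∑ s ∈ range (N + 1), ∑ l ∈ sparseLevels d N with ∑ m, l m = s, 2 ^ ∑ m, l m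
      = ∑ s ∈ range (N + 1), #{l ∈ sparseLevels d N | ∑ m, l m = s} * 2 ^ s := by
        refine sum_congr rfl fun s _ => ?_
        rw [sum_congr rfl fun l hl => congrArg (2 ^ ·) (mem_filter.1 hl).2, sum_const, smul_eq_mul]
    _ ≤ ∑ s ∈ range (N + 1), (N + 1) ^ (d - 1) * 2 ^ s :=
        sum_le_sum fun s _ => Nat.mul_le_mul_right _ (card_filter_sparseLevels_sum_eq_le d N s)
    _ ≤ (N + 1) ^ (d - 1) * 2 ^ (N + 1) := by
        rw [← mul_sum]
        exact Nat.mul_le_mul_left _ (Nat.geomSum_lt le_rfl fun s hs => mem_range.1 hs).le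

theorem stmt_6_general (d : ℕ) :
    ∃ C : ℕ, 0 < C ∧ ∀ k N : ℕ, 1 ≤ N →
      (∑ l ∈ (Fintype.piFinset (fun _ : Fin d => Finset.range (N + 1))).filter
          (fun l => ∑ m, l m ≤ N),
        (k + 1) ^ d * ∏ m, max 1 (2 ^ (l m - 1)))
      ≤ C * ((k + 1) ^ d * 2 ^ N * N ^ (d - 1)) := by
  refine ⟨2 * 2 ^ (d - 1), by positivity, fun k N hN => ?_⟩
  have hN : (N + 1) ^ (d - 1) ≤ 2 ^ (d - 1) * N ^ (d - 1) := by
    rw [← mul_pow]; exact Nat.pow_le_pow_left (by omega) _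
  calc ∑ l ∈ sparseLevels d N, (k + 1) ^ d * ∏ m, max 1 (2 ^ (l m - 1))
      ≤ (k + 1) ^ d * ∑ l ∈ sparseLevels d N, 2 ^ ∑ m, l m := by
        rw [mul_sum]
        exact sum_le_sum fun l _ => Nat.mul_le_mul_left _ (prod_max_one_two_pow_sub_one_le _ l)
    _ ≤ (k + 1) ^ d * ((N + 1) ^ (d - 1) * 2 ^ (N + 1)) :=
        Nat.mul_le_mul_left _ (sum_sparseLevels_two_pow_le d N)
    _ ≤ (k + 1) ^ d * (2 ^ (d - 1) * N ^ (d - 1) * 2 ^ (N + 1)) := by gcongr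
    _ = 2 * 2 ^ (d - 1) * ((k + 1) ^ d * 2 ^ N * N ^ (d - 1)) := by ring

/-- The number of degrees of freedom of the sparse grid space
`⊕_{|l|₁ ≤ N} W_l^k`, where `dim W_l^k = (k+1)^d ∏_m max(1, 2^{l_m-1})`,
is `O((k+1)^d 2^N N^{d-1})` with a constant depending only on `d`. -/
theorem stmt_6 (d : ℕ) (hd : 1 ≤ d) :
    ∃ C : ℕ, 0 < C ∧ ∀ k N : ℕ, 1 ≤ N →
      (∑ l ∈ (Fintype.piFinset (fun _ : Fin d => Finset.range (N + 1))).filter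
          (fun l => ∑ m, l m ≤ N),
        (k + 1) ^ d * ∏ m, max 1 (2 ^ (l m - 1)))
      ≤ C * ((k + 1) ^ d * 2 ^ N * N ^ (d - 1)) :=
  stmt_6_general d
end

section
/- Let V be a finite-dimensional inner product space with norm ‖·‖ and an additional norm |||·|||, and B a bilinear form on a larger space containing V satisfying boundedness |B(w,v)| ≤ C_b |||w||| |||v||| and coercivity B(v,v) ≥ C_s |||v|||² on V. Suppose e(t) = η(t) + ξ(t) with ξ(t) ∈ V, ξ(0) = 0, and for all v ∈ V, ⟨ξ'(t), v⟩ + B(ξ(t), v) = −B(η(t), v). Then ‖ξ(T)‖² + C_s ∫_0^T |||ξ(t)|||² dt ≤ (C_b²/C_s) ∫_0^T |||η(t)|||² dt. -/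
/-- Abstract Galerkin error estimate: with `B` bounded and coercive relative to the
energy norm `E`, `ξ(t) ∈ V`, `ξ(0) = 0` and
`⟨ξ'(t), v⟩ + B(ξ(t), v) = −B(η(t), v)` for all `v ∈ V`, one gets
`‖ξ(T)‖² + C_s ∫₀ᵀ E(ξ)² ≤ (C_b²/C_s) ∫₀ᵀ E(η)²`. -/
theorem stmt_8 {W : Type*} [NormedAddCommGroup W] [InnerProductSpace ℝ W]
    (V : Submodule ℝ W) [FiniteDimensional ℝ V]
    (E : W → ℝ) (B : W →ₗ[ℝ] W →ₗ[ℝ] ℝ) (Cb Cs T : ℝ)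
    (hCb : 0 < Cb) (hCs : 0 < Cs) (hT : 0 ≤ T)
    (hbound : ∀ w v : W, |B w v| ≤ Cb * E w * E v)
    (hcoer : ∀ v ∈ V, Cs * (E v) ^ 2 ≤ B v v)
    (η ξ ξ' : ℝ → W)
    (hξV : ∀ t ∈ Set.Icc 0 T, ξ t ∈ V)
    (hξ0 : ξ 0 = 0)
    (hderiv : ∀ t ∈ Set.Icc 0 T, HasDerivAt ξ (ξ' t) t)
    (heq : ∀ t ∈ Set.Icc 0 T, ∀ v ∈ V,
      inner (𝕜 := ℝ) (ξ' t) v + B (ξ t) v = -B (η t) v)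
    (hintξ : IntervalIntegrable (fun t => (E (ξ t)) ^ 2) MeasureTheory.volume 0 T)
    (hintη : IntervalIntegrable (fun t => (E (η t)) ^ 2) MeasureTheory.volume 0 T) :
    ‖ξ T‖ ^ 2 + Cs * ∫ t in (0:ℝ)..T, (E (ξ t)) ^ 2
      ≤ (Cb ^ 2 / Cs) * ∫ t in (0:ℝ)..T, (E (η t)) ^ 2 := by
  set g : ℝ → ℝ := fun t => ‖ξ t‖ ^ 2 with hg
  set φ : ℝ → ℝ := fun t => (Cb ^ 2 / Cs) * (E (η t)) ^ 2 - Cs * (E (ξ t)) ^ 2 with hφ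
  have hgderiv : ∀ t ∈ Set.Icc 0 T,
      HasDerivAt g (2 * inner (𝕜 := ℝ) (ξ' t) (ξ t)) t := by
    intro t ht
    have h1 : HasDerivAt (fun t => inner (𝕜 := ℝ) (ξ t) (ξ t))
        (inner (𝕜 := ℝ) (ξ t) (ξ' t) + inner (𝕜 := ℝ) (ξ' t) (ξ t)) t :=
      (hderiv t ht).inner ℝ (hderiv t ht)
    have h2 : (fun t => inner (𝕜 := ℝ) (ξ t) (ξ t)) = g := by
      funext s; simp [hg, real_inner_self_eq_norm_sq]
    rw [h2] at h1
    convert h1 using 1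
    rw [real_inner_comm (ξ t) (ξ' t)]; ring
  have hcontg : ContinuousOn g (Set.Icc 0 T) := fun t ht =>
    (hgderiv t ht).continuousAt.continuousWithinAt
  have hφint : MeasureTheory.IntegrableOn φ (Set.Icc 0 T) := by
    have h1 := (intervalIntegrable_iff_integrableOn_Icc_of_le hT).mp hintη
    have h2 := (intervalIntegrable_iff_integrableOn_Icc_of_le hT).mp hintξ
    exact (h1.const_mul _).sub (h2.const_mul _)
  have hle : ∀ t ∈ Set.Ioo 0 T, 2 * inner (𝕜 := ℝ) (ξ' t) (ξ t) ≤ φ t := by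
    intro t ht
    have ht' : t ∈ Set.Icc 0 T := Set.mem_Icc_of_Ioo ht
    have hv := hξV t ht'
    have he := heq t ht' (ξ t) hv
    have hc := hcoer (ξ t) hv
    have hb := hbound (η t) (ξ t)
    have habs : -B (η t) (ξ t) ≤ Cb * E (η t) * E (ξ t) := by have := (abs_le.mp hb).1; linarith
    have hi : inner (𝕜 := ℝ) (ξ' t) (ξ t) = -B (η t) (ξ t) - B (ξ t) (ξ t) := by
      linarith [he]
    have hkey : 2 * (Cb * E (η t)) * E (ξ t) - Cs * E (ξ t) ^ 2
        ≤ (Cb * E (η t)) ^ 2 / Cs := by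
      rw [le_div_iff₀ hCs]
      nlinarith [sq_nonneg (Cb * E (η t) - Cs * E (ξ t))]
    have hrw : Cb ^ 2 / Cs * E (η t) ^ 2 = (Cb * E (η t)) ^ 2 / Cs := by ring
    have hy : 2 * (Cb * E (η t) * E (ξ t)) ≤ Cs * E (ξ t) ^ 2 + Cb ^ 2 / Cs * E (η t) ^ 2 := by
      rw [hrw]; linarith
    rw [hi]
    simp only [hφ]
    nlinarith
  have key : g T - g 0 ≤ ∫ t in (0:ℝ)..T, φ t := by
    apply intervalIntegral.sub_le_integral_of_hasDeriv_right_of_le hT hcontg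
      (g' := fun t => 2 * inner (𝕜 := ℝ) (ξ' t) (ξ t))
      (fun t ht => ((hgderiv t (Set.mem_Icc_of_Ioo ht)).hasDerivWithinAt)) hφint hle
  have hsplit : (∫ t in (0:ℝ)..T, φ t)
      = (Cb ^ 2 / Cs) * (∫ t in (0:ℝ)..T, (E (η t)) ^ 2)
        - Cs * (∫ t in (0:ℝ)..T, (E (ξ t)) ^ 2) := by
    rw [hφ]
    rw [intervalIntegral.integral_sub (hintη.const_mul _) (hintξ.const_mul _),
      intervalIntegral.integral_const_mul, intervalIntegral.integral_const_mul]
  have hg0 : g 0 = 0 := by simp [hg, hξ0]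
  rw [hsplit, hg0] at key
  simp only [hg] at key
  linarith
end
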